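/- arXiv:1809.09218 — 2 statements merged into one kernel-verified Lean document; each statement's English description precedes it below -/
import Mathlib

section
/- Let n ≥ 5 and consider the D_n exceptional configuration: G_1 is the fork with G_1·G_2 = G_1·G_3 = G_1·G_4 = 1, the chain G_4—G_5—…—G_n, all self-intersections -2, all other products 0. The solution of the system (C̃ + Σ a_i G_i)·G_j = 0 with C̃·G_n = 1 and C̃·G_j = 0 for j ≠ n is a_1 = 1, a_2 = a_3 = 1/2, a_4 = … = a_n = 1; in particular a_n = 1. -/
/-- For the `Dₙ` exceptional configuration (`n ≥ 5`; `G₁` the fork meeting `G₂, G₃, G₄`;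
chain `G₄—G₅—⋯—Gₙ`; all self-intersections `-2`), the solution of
`(C̃ + ∑ aᵢ Gᵢ)·Gⱼ = 0` with `C̃·Gₙ = 1` and `C̃·Gⱼ = 0` for `j ≠ n` is
`a₁ = 1`, `a₂ = a₃ = 1/2`, `a₄ = ⋯ = aₙ = 1`; in particular `aₙ = 1`. -/
theorem stmt_4 (n : ℕ) (hn : 5 ≤ n) (G : ℕ → ℕ → ℚ)
    (hG : ∀ i j, G i j =
      if i = j then -2
      else if (i = 1 ∧ (j = 2 ∨ j = 3 ∨ j = 4)) ∨ (j = 1 ∧ (i = 2 ∨ i = 3 ∨ i = 4)) then 1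
      else if (4 ≤ i ∧ j = i + 1) ∨ (4 ≤ j ∧ i = j + 1) then 1
      else 0)
    (a : ℕ → ℚ) :
    (∀ j ∈ Finset.Icc 1 n,
        (if j = n then (1 : ℚ) else 0) + ∑ i ∈ Finset.Icc 1 n, a i * G i j = 0) ↔
      (a 1 = 1 ∧ a 2 = 1/2 ∧ a 3 = 1/2 ∧ (∀ i, 4 ≤ i → i ≤ n → a i = 1) ∧ a n = 1) := by
  have key : ∀ j, 1 ≤ j → j ≤ n → ∑ i ∈ Finset.Icc 1 n, a i * G i j =
      if j = 1 then -2 * a 1 + a 2 + a 3 + a 4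
      else if j = 2 then a 1 - 2 * a 2
      else if j = 3 then a 1 - 2 * a 3
      else if j = 4 then a 1 - 2 * a 4 + a 5
      else if j = n then a (n - 1) - 2 * a n
      else a (j - 1) - 2 * a j + a (j + 1) := by
    intro j hj1 hjn
    by_cases e1 : j = 1
    · subst e1
      rw [if_pos rfl]
      rw [← Finset.sum_subset (Finset.insert_subset_iff.2 ⟨by simp [Finset.mem_Icc]; omega,
          Finset.insert_subset_iff.2 ⟨by simp [Finset.mem_Icc]; omega,
          Finset.insert_subset_iff.2 ⟨by simp [Finset.mem_Icc]; omega,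
          Finset.singleton_subset_iff.2 (Finset.mem_Icc.mpr (by omega))⟩⟩⟩ :
          ({1, 2, 3, 4} : Finset ℕ) ⊆ Finset.Icc 1 n)
          (by
            intro i hi hni
            rw [Finset.mem_Icc] at hi
            simp only [Finset.mem_insert, Finset.mem_singleton] at hni
            push_neg at hni
            rw [hG]
            split_ifs <;> first | (exfalso; omega) | ring)]
      rw [Finset.sum_insert (by decide), Finset.sum_insert (by decide),
        Finset.sum_insert (by decide), Finset.sum_singleton]
      rw [hG 1 1, hG 2 1, hG 3 1, hG 4 1]
      norm_num
      ring
    · by_cases e2 : j = 2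
      · subst e2
        rw [if_neg (by omega), if_pos rfl]
        rw [← Finset.sum_subset (Finset.insert_subset_iff.2 ⟨by simp [Finset.mem_Icc]; omega,
            Finset.singleton_subset_iff.2 (Finset.mem_Icc.mpr (by omega))⟩ :
            ({1, 2} : Finset ℕ) ⊆ Finset.Icc 1 n)
            (by
              intro i hi hni
              rw [Finset.mem_Icc] at hi
              simp only [Finset.mem_insert, Finset.mem_singleton] at hni
              push_neg at hni
              rw [hG]
              split_ifs <;> first | (exfalso; omega) | ring)]
        rw [Finset.sum_insert (by decide), Finset.sum_singleton]
        rw [hG 1 2, hG 2 2]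
        norm_num
        ring
      · by_cases e3 : j = 3
        · subst e3
          rw [if_neg (by omega), if_neg (by omega), if_pos rfl]
          rw [← Finset.sum_subset (Finset.insert_subset_iff.2 ⟨by simp [Finset.mem_Icc]; omega,
              Finset.singleton_subset_iff.2 (Finset.mem_Icc.mpr (by omega))⟩ :
              ({1, 3} : Finset ℕ) ⊆ Finset.Icc 1 n)
              (by
                intro i hi hni
                rw [Finset.mem_Icc] at hi
                simp only [Finset.mem_insert, Finset.mem_singleton] at hni
                push_neg at hni
                rw [hG]
                split_ifs <;> first | (exfalso; omega) | ring)]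
          rw [Finset.sum_insert (by decide), Finset.sum_singleton]
          rw [hG 1 3, hG 3 3]
          norm_num
          ring
        · by_cases e4 : j = 4
          · subst e4
            rw [if_neg (by omega), if_neg (by omega), if_neg (by omega), if_pos rfl]
            rw [← Finset.sum_subset (Finset.insert_subset_iff.2 ⟨by simp [Finset.mem_Icc]; omega,
                Finset.insert_subset_iff.2 ⟨by simp [Finset.mem_Icc]; omega,
                Finset.singleton_subset_iff.2 (Finset.mem_Icc.mpr (by omega))⟩⟩ :
                ({1, 4, 5} : Finset ℕ) ⊆ Finset.Icc 1 n)
                (by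
                  intro i hi hni
                  rw [Finset.mem_Icc] at hi
                  simp only [Finset.mem_insert, Finset.mem_singleton] at hni
                  push_neg at hni
                  rw [hG]
                  split_ifs <;> first | (exfalso; omega) | ring)]
            rw [Finset.sum_insert (by decide), Finset.sum_insert (by decide),
              Finset.sum_singleton]
            rw [hG 1 4, hG 4 4, hG 5 4]
            norm_num
            ring
          · by_cases en : j = n
            · subst j
              rw [if_neg (by omega), if_neg (by omega), if_neg (by omega), if_neg (by omega),
                if_pos rfl]
              rw [← Finset.sum_subset (Finset.insert_subset_iff.2
                  ⟨by simp [Finset.mem_Icc]; omega,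
                  Finset.singleton_subset_iff.2 (Finset.mem_Icc.mpr (by omega))⟩ :
                  ({n - 1, n} : Finset ℕ) ⊆ Finset.Icc 1 n)
                  (by
                    intro i hi hni
                    rw [Finset.mem_Icc] at hi
                    simp only [Finset.mem_insert, Finset.mem_singleton] at hni
                    push_neg at hni
                    rw [hG]
                    split_ifs <;> first | (exfalso; omega) | ring)]
              rw [Finset.sum_insert (by simp only [Finset.mem_insert, Finset.mem_singleton]; omega), Finset.sum_singleton]
              rw [hG (n - 1) n, hG n n]
              rw [if_neg (by omega), if_neg (by omega), if_pos (by omega), if_pos rfl]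
              ring
            · -- 5 ≤ j < n
              have hj5 : 5 ≤ j := by omega
              have hjn' : j < n := by omega
              rw [if_neg (by omega), if_neg (by omega), if_neg (by omega), if_neg (by omega),
                if_neg en]
              rw [← Finset.sum_subset (Finset.insert_subset_iff.2
                  ⟨by simp [Finset.mem_Icc]; omega,
                  Finset.insert_subset_iff.2 ⟨by simp [Finset.mem_Icc]; omega,
                  Finset.singleton_subset_iff.2 (Finset.mem_Icc.mpr (by omega))⟩⟩ :
                  ({j - 1, j, j + 1} : Finset ℕ) ⊆ Finset.Icc 1 n)
                  (by
                    intro i hi hni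
                    rw [Finset.mem_Icc] at hi
                    simp only [Finset.mem_insert, Finset.mem_singleton] at hni
                    push_neg at hni
                    rw [hG]
                    split_ifs <;> first | (exfalso; omega) | ring)]
              rw [Finset.sum_insert (by simp only [Finset.mem_insert, Finset.mem_singleton]; omega), Finset.sum_insert (by simp only [Finset.mem_insert, Finset.mem_singleton]; omega),
                Finset.sum_singleton]
              rw [hG (j - 1) j, hG j j, hG (j + 1) j]
              rw [if_neg (by omega), if_neg (by omega), if_pos (by omega), if_pos rfl,
                if_neg (by omega), if_neg (by omega), if_pos (by omega)]
              ring
  constructor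
  · intro h
    have eq : ∀ j, 1 ≤ j → j ≤ n →
        (if j = n then (1 : ℚ) else 0) +
          (if j = 1 then -2 * a 1 + a 2 + a 3 + a 4
          else if j = 2 then a 1 - 2 * a 2
          else if j = 3 then a 1 - 2 * a 3
          else if j = 4 then a 1 - 2 * a 4 + a 5
          else if j = n then a (n - 1) - 2 * a n
          else a (j - 1) - 2 * a j + a (j + 1)) = 0 := by
      intro j hj1 hj2
      rw [← key j hj1 hj2]
      exact h j (Finset.mem_Icc.mpr ⟨hj1, hj2⟩)
    have E1 := eq 1 (by omega) (by omega)
    rw [if_neg (by omega : ¬(1 : ℕ) = n), if_pos rfl] at E1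
    have E2 := eq 2 (by omega) (by omega)
    rw [if_neg (by omega : ¬(2 : ℕ) = n), if_neg (by omega), if_pos rfl] at E2
    have E3 := eq 3 (by omega) (by omega)
    rw [if_neg (by omega : ¬(3 : ℕ) = n), if_neg (by omega), if_neg (by omega), if_pos rfl] at E3
    have E4 := eq 4 (by omega) (by omega)
    rw [if_neg (by omega : ¬(4 : ℕ) = n), if_neg (by omega), if_neg (by omega),
      if_neg (by omega), if_pos rfl] at E4
    have En := eq n (by omega) (by omega)
    rw [if_pos rfl, if_neg (by omega), if_neg (by omega), if_neg (by omega), if_neg (by omega),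
      if_pos rfl] at En
    have Emid : ∀ k, 5 ≤ k → k < n → a (k - 1) - 2 * a k + a (k + 1) = 0 := by
      intro k hk5 hkn
      have Ek := eq k (by omega) (by omega)
      rw [if_neg (by omega), if_neg (by omega), if_neg (by omega), if_neg (by omega),
        if_neg (by omega), if_neg (by omega)] at Ek
      linarith
    have ha2 : a 2 = a 1 / 2 := by linarith
    have ha3 : a 3 = a 1 / 2 := by linarith
    have ha4 : a 4 = a 1 := by linarith
    have ha5 : a 5 = a 1 := by linarith
    have hall : ∀ k, 4 ≤ k → k ≤ n → a k = a 1 := by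
      intro k
      induction k using Nat.strong_induction_on with
      | _ k ih =>
        intro hk4 hkn
        by_cases h4 : k = 4
        · subst h4; exact ha4
        by_cases h5 : k = 5
        · subst h5; exact ha5
        have h6 : 6 ≤ k := by omega
        have Em := Emid (k - 1) (by omega) (by omega)
        have e1 : k - 1 - 1 = k - 2 := by omega
        have e2 : k - 1 + 1 = k := by omega
        rw [e1, e2] at Em
        have i1 := ih (k - 1) (by omega) (by omega) (by omega)
        have i2 := ih (k - 2) (by omega) (by omega) (by omega)
        linarith
    have han : a n = a 1 := hall n (by omega) (le_refl n)
    have han1 : a (n - 1) = a 1 := hall (n - 1) (by omega) (by omega)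
    have ha1 : a 1 = 1 := by
      rw [han, han1] at En; linarith
    exact ⟨ha1, by rw [ha2, ha1], by rw [ha3, ha1],
      fun i hi1 hi2 => by rw [hall i hi1 hi2, ha1], by rw [han, ha1]⟩
  · rintro ⟨h1, h2, h3, h4, hlast⟩ j hj
    rw [Finset.mem_Icc] at hj
    rw [key j hj.1 hj.2]
    by_cases e1 : j = 1
    · subst e1
      rw [if_neg (by omega : ¬(1 : ℕ) = n), if_pos rfl, h1, h2, h3,
        h4 4 (by omega) (by omega)]
      norm_num
    by_cases e2 : j = 2
    · subst e2
      rw [if_neg (by omega : ¬(2 : ℕ) = n), if_neg (by omega), if_pos rfl, h1, h2]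
      norm_num
    by_cases e3 : j = 3
    · subst e3
      rw [if_neg (by omega : ¬(3 : ℕ) = n), if_neg (by omega), if_neg (by omega), if_pos rfl,
        h1, h3]
      norm_num
    by_cases e4 : j = 4
    · subst e4
      rw [if_neg (by omega : ¬(4 : ℕ) = n), if_neg (by omega), if_neg (by omega),
        if_neg (by omega), if_pos rfl, h1, h4 4 (by omega) (by omega),
        h4 5 (by omega) (by omega)]
      norm_num
    by_cases en : j = n
    · subst j
      rw [if_pos rfl, if_neg (by omega), if_neg (by omega), if_neg (by omega),
        if_neg (by omega), if_pos rfl, hlast, h4 (n - 1) (by omega) (by omega)]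
      norm_num
    · rw [if_neg (by omega), if_neg (by omega), if_neg (by omega), if_neg (by omega),
        if_neg (by omega), if_neg en, h4 (j - 1) (by omega) (by omega), h4 j (by omega) (by omega),
        h4 (j + 1) (by omega) (by omega)]
      norm_num
end

section
/- In ℙ³ with coordinates [x:y:z:t], the quartic surface given by x²yz + y²xz + z²xy + t²yz + t²xz + t⁴ + 2·xyzt = 0 (i.e., the member S_{-2} of the pencil x²yz + y²xz + z²xy + t²xz + t²yz + t⁴ = λxyzt at λ = -2 in family №2.32) is irreducible, or more precisely: the quartic form x²yz + xy²z + xyz² + t²xz + t²yz + t⁴ - λxyzt is irreducible over ℂ for all λ ∈ ℂ. -/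
/-!
On the plane `y = z`, in the chart `y = 1`, the quartic becomes the monic quadratic
`x² + (t² - λt + 2)x + t⁴ + t²` in `x` over `ℂ[t]`. Its discriminant
`-3t⁴ - 2λt³ + λ²t² - 4λt + 4` is not a square (compare coefficients), so this plane section
is irreducible and in any factorization of the quartic one factor restricts to a nonzero
constant. Restricting further to the line `x = t`, on which the quartic keeps its full degree 4,
shows that this factor has total degree 0, hence is a unit.
-/

open Polynomial in
theorem Polynomial.irreducible_X_sq_add_C_mul_X_add_C {R : Type*} [CommRing R] [IsDomain R]
    {b c : R} (h : ∀ s : R, discrim 1 b c ≠ s ^ 2) : Irreducible (X ^ 2 + C b * X + C c) := by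
  have hdeg : (X ^ 2 + C b * X + C c).natDegree = 2 := by compute_degree!
  rw [Monic.irreducible_iff_roots_eq_zero_of_degree_le_three (by monicity!) hdeg.ge
    (hdeg.le.trans (by norm_num))]
  refine Multiset.eq_zero_of_forall_notMem fun x hx => ?_
  have hroot : (X ^ 2 + C b * X + C c).IsRoot x := isRoot_of_mem_roots hx
  refine quadratic_ne_zero_of_discrim_ne_sq h x ?_
  simpa [sq] using hroot

namespace MvPolynomial

open Polynomial

variable {σ R : Type*}

theorem natDegree_aeval_le_totalDegree {S : Type*} [CommSemiring R] [CommSemiring S]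
    [Algebra R S] {f : σ → S[X]} (hf : ∀ i, (f i).natDegree ≤ 1) (p : MvPolynomial σ R) :
    (aeval f p).natDegree ≤ p.totalDegree := by
  conv_lhs => rw [p.as_sum, map_sum]
  refine natDegree_sum_le_of_forall_le _ _ fun d hd => ?_
  rw [aeval_monomial, Polynomial.algebraMap_apply]
  calc (Polynomial.C (algebraMap R S (coeff d p)) * d.prod fun i k => f i ^ k).natDegree
      ≤ ∑ i ∈ d.support, (f i ^ d i).natDegree :=
        natDegree_C_mul_le _ _ |>.trans (natDegree_prod_le _ _)
    _ ≤ ∑ i ∈ d.support, d i := Finset.sum_le_sum fun i _ =>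
        natDegree_pow_le.trans (by simpa using Nat.mul_le_mul_left (d i) (hf i))
    _ ≤ p.totalDegree := le_totalDegree hd

theorem natDegree_aeval_eq_totalDegree_of_dvd {S : Type*} [CommRing R] [IsDomain R]
    [CommSemiring S] [Algebra R S] {f : σ → S[X]} (hf : ∀ i, (f i).natDegree ≤ 1)
    {P Q : MvPolynomial σ R} (hP0 : P ≠ 0) (hP : (aeval f P).natDegree = P.totalDegree)
    (hQ : Q ∣ P) : (aeval f Q).natDegree = Q.totalDegree := by
  obtain ⟨Q', rfl⟩ := hQ
  have hQ' := natDegree_aeval_le_totalDegree (R := R) hf Q'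
  have hmul := natDegree_mul_le (p := aeval f Q) (q := aeval f Q')
  rw [← map_mul, hP, totalDegree_mul_of_isDomain (left_ne_zero_of_mul hP0)
    (right_ne_zero_of_mul hP0)] at hmul
  exact (natDegree_aeval_le_totalDegree hf Q).antisymm (by omega)

theorem isUnit_of_dvd_of_isUnit_aeval {K : Type*} [Field K] {f : σ → K[X]}
    (hf : ∀ i, (f i).natDegree ≤ 1) {P Q : MvPolynomial σ K} (hP0 : P ≠ 0)
    (hP : (aeval f P).natDegree = P.totalDegree) (hQ : Q ∣ P) (hu : IsUnit (aeval f Q)) :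
    IsUnit Q := by
  have hQ0 : Q ≠ 0 := ne_zero_of_dvd_ne_zero hP0 hQ
  have hdeg : Q.totalDegree = 0 := by
    rw [← natDegree_aeval_eq_totalDegree_of_dvd hf hP0 hP hQ, natDegree_eq_zero_of_isUnit hu]
  refine isUnit_iff_totalDegree_of_isReduced.mpr ⟨isUnit_iff_ne_zero.mpr fun h0 => hQ0 ?_, hdeg⟩
  rw [totalDegree_eq_zero_iff_eq_C.mp hdeg, h0, map_zero]

end MvPolynomial

open MvPolynomial in
noncomputable def pencilQuartic (l : ℂ) : MvPolynomial (Fin 4) ℂ :=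
  X 0 ^ 2 * X 1 * X 2 + X 0 * X 1 ^ 2 * X 2 + X 0 * X 1 * X 2 ^ 2 +
    X 3 ^ 2 * X 0 * X 2 + X 3 ^ 2 * X 1 * X 2 + X 3 ^ 4 - C l * (X 0 * X 1 * X 2 * X 3)

section Pencil

open Polynomial

theorem discrim_planeSection_pencilQuartic_ne_sq (l : ℂ) (s : ℂ[X]) :
    discrim 1 (X ^ 2 - C l * X + 2) (X ^ 4 + X ^ 2) ≠ s ^ 2 := by
  intro h
  have hD : discrim 1 (X ^ 2 - C l * X + 2) (X ^ 4 + X ^ 2)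
      = C (-3) * X ^ 4 + C (-2 * l) * X ^ 3 + C (l ^ 2) * X ^ 2 + C (-4 * l) * X + C 4 := by
    simp only [discrim, map_neg, map_mul, map_pow, map_ofNat]
    ring
  have hdeg : s.natDegree = 2 := by
    have h4 : (s ^ 2).natDegree = 4 := by rw [← h, hD]; compute_degree!
    rw [natDegree_pow] at h4
    omega
  obtain ⟨a, b, c, rfl⟩ : ∃ a b c, s = C a * X ^ 2 + C b * X + C c :=
    ⟨s.coeff 2, s.coeff 1, s.coeff 0, (as_sum_range_C_mul_X_pow s).trans <| by
      rw [hdeg]; simp only [Finset.sum_range_succ, Finset.sum_range_zero]; ring⟩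
  have hsq : (C a * X ^ 2 + C b * X + C c) ^ 2 = C (a ^ 2) * X ^ 4 + C (2 * a * b) * X ^ 3
      + C (2 * a * c + b ^ 2) * X ^ 2 + C (2 * b * c) * X + C (c ^ 2) := by
    simp only [map_mul, map_pow, map_add, map_ofNat]
    ring
  rw [hD, hsq] at h
  have e : ∀ k, _ := fun k => congrArg (coeff · k) h.symm
  have e4 := e 4; have e3 := e 3; have e2 := e 2; have e1 := e 1; have e0 := e 0
  simp only [coeff_add, coeff_C_mul, coeff_X_pow, coeff_X, coeff_C] at e4 e3 e2 e1 e0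
  norm_num at e4 e3 e2 e1 e0
  have hbc : b * (c - 2 * a) = 0 := by linear_combination e1 / 2 - e3
  rcases mul_eq_zero.mp hbc with hb | hc
  · have hl : l = 0 := by linear_combination e3 / 2 - a * hb
    have hac : a * c = 0 := by linear_combination (e2 - b * hb + l * hl) / 2
    have : (0 : ℂ) = -12 := by linear_combination c ^ 2 * e4 - 3 * e0 - a * c * hac
    norm_num at this
  · have : (4 : ℂ) = -12 := by linear_combination -e0 + (c + 2 * a) * hc + 4 * e4
    norm_num at this

/-- Restriction to the plane `y = z` in the chart `y = 1`, as a polynomial in `x` whose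
coefficients are polynomials in `t`. -/
noncomputable def planeSection : MvPolynomial (Fin 4) ℂ →ₐ[ℂ] ℂ[X][X] :=
  MvPolynomial.aeval ![X, 1, 1, C X]

/-- The line `x = t` of that plane section, parametrised by `t`. -/
noncomputable def lineParam : Fin 4 → ℂ[X] :=
  ![X, 1, 1, X]

theorem natDegree_lineParam_le (i : Fin 4) : (lineParam i).natDegree ≤ 1 := by
  fin_cases i <;> simp [lineParam]

theorem planeSection_pencilQuartic (l : ℂ) :
    planeSection (pencilQuartic l)
      = X ^ 2 + C (X ^ 2 - C l * X + 2) * X + C (X ^ 4 + X ^ 2) := by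
  simp [planeSection, pencilQuartic, map_ofNat]
  ring

theorem irreducible_planeSection_pencilQuartic (l : ℂ) :
    Irreducible (planeSection (pencilQuartic l)) := by
  rw [planeSection_pencilQuartic]
  exact irreducible_X_sq_add_C_mul_X_add_C (discrim_planeSection_pencilQuartic_ne_sq l)

theorem eval_X_planeSection (p : MvPolynomial (Fin 4) ℂ) :
    (planeSection p).eval X = MvPolynomial.aeval lineParam p := by
  induction p using MvPolynomial.induction_on with
  | C a => simp [planeSection]
  | add p q hp hq => simp [hp, hq]
  | mul_X p i hp =>
    simp only [planeSection] at hp ⊢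
    fin_cases i <;> simp [lineParam, hp]

theorem isHomogeneous_pencilQuartic (l : ℂ) : (pencilQuartic l).IsHomogeneous 4 := by
  have hX (i : Fin 4) : (MvPolynomial.X i : MvPolynomial (Fin 4) ℂ).IsHomogeneous 1 :=
    MvPolynomial.isHomogeneous_X ℂ i
  refine .sub (.add (.add (.add (.add (.add ?_ ?_) ?_) ?_) ?_) ?_)
    ((((hX 0).mul (hX 1)).mul (hX 2)).mul (hX 3) |>.C_mul l)
  · exact (((hX 0).pow 2).mul (hX 1)).mul (hX 2)
  · exact ((hX 0).mul ((hX 1).pow 2)).mul (hX 2)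
  · exact ((hX 0).mul (hX 1)).mul ((hX 2).pow 2)
  · exact (((hX 3).pow 2).mul (hX 0)).mul (hX 2)
  · exact (((hX 3).pow 2).mul (hX 1)).mul (hX 2)
  · exact (hX 3).pow 4

theorem natDegree_aeval_pencilQuartic (l : ℂ) :
    (MvPolynomial.aeval lineParam (pencilQuartic l)).natDegree
      = (pencilQuartic l).totalDegree := by
  refine le_antisymm (MvPolynomial.natDegree_aeval_le_totalDegree natDegree_lineParam_le _)
    ((isHomogeneous_pencilQuartic l).totalDegree_le.trans ?_)
  have h : MvPolynomial.aeval lineParam (pencilQuartic l)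
      = X ^ 4 + X ^ 3 + (2 - C l) * X ^ 2 + 2 * X := by
    simp [lineParam, pencilQuartic]
    ring
  have h4 : (X ^ 4 + X ^ 3 + (2 - C l) * X ^ 2 + 2 * X : ℂ[X]).natDegree = 4 := by
    compute_degree!
  rw [h, h4]

end Pencil

open MvPolynomial

/-- The quartic form `x²yz + xy²z + xyz² + t²xz + t²yz + t⁴ - λxyzt` (the member `S_λ` of
the pencil of family №2.32) is irreducible over `ℂ` for every `λ ∈ ℂ`. -/
theorem stmt_12 :
    ∀ l : ℂ, Irreducible
      ((X 0 ^ 2 * X 1 * X 2 + X 0 * X 1 ^ 2 * X 2 + X 0 * X 1 * X 2 ^ 2 +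
        X 3 ^ 2 * X 0 * X 2 + X 3 ^ 2 * X 1 * X 2 + X 3 ^ 4 -
        C l * (X 0 * X 1 * X 2 * X 3) : MvPolynomial (Fin 4) ℂ)) := by
  intro l
  change Irreducible (pencilQuartic l)
  have hirr := irreducible_planeSection_pencilQuartic l
  have hP0 : pencilQuartic l ≠ 0 := fun h => hirr.ne_zero (by rw [h, map_zero])
  have hfactor (Q : MvPolynomial (Fin 4) ℂ) (hQ : Q ∣ pencilQuartic l)
      (hu : IsUnit (planeSection Q)) : IsUnit Q := by
    refine isUnit_of_dvd_of_isUnit_aeval natDegree_lineParam_le hP0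
      (natDegree_aeval_pencilQuartic l) hQ ?_
    rw [← eval_X_planeSection]
    exact hu.map (Polynomial.evalRingHom Polynomial.X)
  refine ⟨fun hu => hirr.not_isUnit (hu.map planeSection), fun Q R hQR => ?_⟩
  rw [hQR, map_mul] at hirr
  exact (hirr.isUnit_or_isUnit rfl).imp (hfactor Q (Dvd.intro R hQR.symm))
    (hfactor R (Dvd.intro_left Q hQR.symm))
end
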